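/- For every τ in the upper half-plane ℍ and every v ∈ ℂ, the v-derivative of the Jacobi theta function θ satisfies θ'(v, −1/τ) = (1/i) · (τ/i)^{1/2} · e^{πiτv²} · (2πiτv·θ(τv, τ) + τ·θ'(τv, τ)). -/

import Mathlib

/-!
Writing `p = e^{πiτ}`, Jacobi's triple product identity
`∏ (1 - p^{2n}) (1 + x p^{2n-1}) (1 + x⁻¹ p^{2n-1}) = ∑_{n ∈ ℤ} p^{n²} xⁿ` (products over `n ≥ 1`)
identifies the product `θ(v, τ)` with `-i e^{πiτ/4 + πiv} ϑ(v + (τ + 1)/2, τ)`, where `ϑ` is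
Mathlib's `jacobiTheta₂`. The modular transformation of `ϑ` under `τ ↦ -1/τ` then gives
`θ(v, -1/τ) = (1/i) (τ/i)^{1/2} e^{πiτv²} θ(τv, τ)` for all `v`, and the theorem is the
derivative of this identity in `v`.

The triple product is obtained as a limit of its finite version, which is the Gauss binomial
theorem `∏_{j<m} (1 + z tʲ) = ∑_k [m choose k]_t t^{k(k-1)/2} zᵏ` at `t = p²`,
`z = x p^{1-2N}`, `m = 2N`; the passage `N → ∞` is dominated convergence, the `t`-binomial
coefficients being uniformly bounded and tending to `1 / ∏ (1 - t^{n})`.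
-/

open Complex

noncomputable def JThetaFactor (v τ : ℂ) (n : ℕ) : ℂ :=
  (1 - Complex.exp (2 * (Real.pi : ℂ) * I * τ) ^ (n + 1)) *
  (1 - Complex.exp (2 * (Real.pi : ℂ) * I * v) * Complex.exp (2 * (Real.pi : ℂ) * I * τ) ^ (n + 1)) *
  (1 - Complex.exp (-(2 * (Real.pi : ℂ) * I * v)) * Complex.exp (2 * (Real.pi : ℂ) * I * τ) ^ (n + 1))

/-- The Jacobi theta function θ(v, τ). -/
noncomputable def JTheta (v τ : ℂ) : ℂ :=
  2 * Complex.exp (2 * (Real.pi : ℂ) * I * τ / 8) * Complex.sin ((Real.pi : ℂ) * v) *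
    ∏' n : ℕ, JThetaFactor v τ n

noncomputable def JTheta1Factor (v τ : ℂ) (n : ℕ) : ℂ :=
  (1 - Complex.exp (2 * (Real.pi : ℂ) * I * τ) ^ (n + 1)) *
  (1 + Complex.exp (2 * (Real.pi : ℂ) * I * v) * Complex.exp (2 * (Real.pi : ℂ) * I * τ) ^ (n + 1)) *
  (1 + Complex.exp (-(2 * (Real.pi : ℂ) * I * v)) * Complex.exp (2 * (Real.pi : ℂ) * I * τ) ^ (n + 1))

/-- The Jacobi theta function θ₁(v, τ). -/
noncomputable def JTheta1 (v τ : ℂ) : ℂ :=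
  2 * Complex.exp (2 * (Real.pi : ℂ) * I * τ / 8) * Complex.cos ((Real.pi : ℂ) * v) *
    ∏' n : ℕ, JTheta1Factor v τ n

noncomputable def JTheta2Factor (v τ : ℂ) (n : ℕ) : ℂ :=
  (1 - Complex.exp (2 * (Real.pi : ℂ) * I * τ) ^ (n + 1)) *
  (1 - Complex.exp (2 * (Real.pi : ℂ) * I * v) * Complex.exp (2 * (Real.pi : ℂ) * I * τ * ((n : ℂ) + 1 / 2))) *
  (1 - Complex.exp (-(2 * (Real.pi : ℂ) * I * v)) * Complex.exp (2 * (Real.pi : ℂ) * I * τ * ((n : ℂ) + 1 / 2)))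

/-- The Jacobi theta function θ₂(v, τ). -/
noncomputable def JTheta2 (v τ : ℂ) : ℂ := ∏' n : ℕ, JTheta2Factor v τ n

noncomputable def JTheta3Factor (v τ : ℂ) (n : ℕ) : ℂ :=
  (1 - Complex.exp (2 * (Real.pi : ℂ) * I * τ) ^ (n + 1)) *
  (1 + Complex.exp (2 * (Real.pi : ℂ) * I * v) * Complex.exp (2 * (Real.pi : ℂ) * I * τ * ((n : ℂ) + 1 / 2))) *
  (1 + Complex.exp (-(2 * (Real.pi : ℂ) * I * v)) * Complex.exp (2 * (Real.pi : ℂ) * I * τ * ((n : ℂ) + 1 / 2)))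

/-- The Jacobi theta function θ₃(v, τ). -/
noncomputable def JTheta3 (v τ : ℂ) : ℂ := ∏' n : ℕ, JTheta3Factor v τ n

open Filter Finset Topology Real

section QBinomial

variable {K : Type*} [Field K]

def qPochhammer (t : K) (m : ℕ) : K := ∏ j ∈ range m, (1 - t ^ (j + 1))

def qBinomial (t : K) (m k : ℕ) : K :=
  if k ≤ m then qPochhammer t m / (qPochhammer t k * qPochhammer t (m - k)) else 0

variable {t : K}

lemma qPochhammer_succ (t : K) (m : ℕ) :
    qPochhammer t (m + 1) = qPochhammer t m * (1 - t ^ (m + 1)) :=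
  prod_range_succ _ m

lemma qPochhammer_zero (t : K) : qPochhammer t 0 = 1 :=
  prod_range_zero _

lemma qPochhammer_ne_zero (ht : ∀ n : ℕ, t ^ (n + 1) ≠ 1) (m : ℕ) : qPochhammer t m ≠ 0 :=
  prod_ne_zero_iff.mpr fun j _ => sub_ne_zero.mpr (ht j).symm

lemma qBinomial_zero_right (ht : ∀ n : ℕ, t ^ (n + 1) ≠ 1) (m : ℕ) :
    qBinomial t m 0 = 1 := by
  rw [qBinomial, if_pos m.zero_le, Nat.sub_zero, qPochhammer_zero, one_mul,
    div_self (qPochhammer_ne_zero ht m)]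

lemma qBinomial_self (ht : ∀ n : ℕ, t ^ (n + 1) ≠ 1) (m : ℕ) : qBinomial t m m = 1 := by
  rw [qBinomial, if_pos le_rfl, Nat.sub_self, qPochhammer_zero, mul_one,
    div_self (qPochhammer_ne_zero ht m)]

lemma qBinomial_of_lt {m k : ℕ} (h : m < k) : qBinomial t m k = 0 := by
  rw [qBinomial, if_neg h.not_ge]

lemma qBinomial_succ_succ (ht : ∀ n : ℕ, t ^ (n + 1) ≠ 1) (m k : ℕ) :
    qBinomial t (m + 1) (k + 1) = qBinomial t m (k + 1) + t ^ (m - k) * qBinomial t m k := by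
  rcases lt_trichotomy k m with hk | rfl | hk
  · obtain ⟨r, hr⟩ : ∃ r, m = k + r + 1 := ⟨m - k - 1, by omega⟩
    subst hr
    simp only [qBinomial, if_pos (by omega : k + 1 ≤ k + r + 1 + 1),
      if_pos (by omega : k + 1 ≤ k + r + 1), if_pos (by omega : k ≤ k + r + 1),
      show k + r + 1 + 1 - (k + 1) = r + 1 by omega, show k + r + 1 - (k + 1) = r by omega,
      show k + r + 1 - k = r + 1 by omega, qPochhammer_succ t (k + r + 1), qPochhammer_succ t r,
      qPochhammer_succ t k]
    have h1 := sub_ne_zero.mpr (ht k).symm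
    have h2 := sub_ne_zero.mpr (ht r).symm
    field_simp
    ring
  · simp [qBinomial_self ht, qBinomial_of_lt (Nat.lt_succ_self k)]
  · simp [qBinomial_of_lt hk, qBinomial_of_lt (Nat.lt_succ_of_lt hk),
      qBinomial_of_lt (Nat.succ_lt_succ hk)]

theorem prod_one_add_mul_pow_eq_sum_qBinomial (ht : ∀ n : ℕ, t ^ (n + 1) ≠ 1) (z : K)
    (m : ℕ) :
    ∏ j ∈ range m, (1 + z * t ^ j) =
      ∑ k ∈ range (m + 1), qBinomial t m k * t ^ k.choose 2 * z ^ k := by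
  induction m with
  | zero => simp [qBinomial_zero_right ht]
  | succ m ih =>
    have hterm (k : ℕ) : qBinomial t (m + 1) (k + 1) * t ^ (k + 1).choose 2 * z ^ (k + 1) =
        qBinomial t m (k + 1) * t ^ (k + 1).choose 2 * z ^ (k + 1) +
          qBinomial t m k * t ^ k.choose 2 * z ^ k * (z * t ^ m) := by
      rcases le_or_gt k m with hk | hk
      · have hpow : t ^ (m - k) * t ^ k = t ^ m := by rw [← pow_add, Nat.sub_add_cancel hk]
        rw [qBinomial_succ_succ ht, Nat.choose_succ_succ', Nat.choose_one_right]
        linear_combination (qBinomial t m k * t ^ k.choose 2 * z ^ (k + 1)) * hpow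
      · simp [qBinomial_of_lt hk, qBinomial_of_lt (Nat.lt_succ_of_lt hk),
          qBinomial_of_lt (Nat.succ_lt_succ hk)]
    have hshift := sum_range_succ' (fun k => qBinomial t m k * t ^ k.choose 2 * z ^ k) (m + 1)
    rw [sum_range_succ, qBinomial_of_lt (Nat.lt_succ_self m), qBinomial_zero_right ht,
      Nat.choose_zero_succ] at hshift
    rw [prod_range_succ, ih, sum_range_succ' _ (m + 1), sum_congr rfl fun k _ => hterm k,
      sum_add_distrib, ← sum_mul, qBinomial_zero_right ht, Nat.choose_zero_succ]
    linear_combination hshift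

end QBinomial

section FiniteTripleProduct

variable {K : Type*} [Field K] {p : K}

lemma two_mul_choose_two_add_self (k : ℕ) : 2 * k.choose 2 + k = k ^ 2 := by
  induction k with
  | zero => rfl
  | succ k ih =>
    rw [Nat.choose_succ_succ', Nat.choose_one_right]
    linear_combination ih

lemma sum_range_two_mul_add_one (N : ℕ) : ∑ j ∈ range N, (2 * j + 1) = N ^ 2 := by
  induction N with
  | zero => rfl
  | succ N ih =>
    rw [sum_range_succ, ih]
    ring

lemma prod_one_add_mul_pow_odd (hp : ∀ n : ℕ, (p ^ 2) ^ (n + 1) ≠ 1) (y : K) (m : ℕ) :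
    ∏ j ∈ range m, (1 + y * p ^ (2 * j + 1)) =
      ∑ k ∈ range (m + 1), qBinomial (p ^ 2) m k * p ^ (k ^ 2) * y ^ k := by
  convert prod_one_add_mul_pow_eq_sum_qBinomial hp (y * p) m using 2 with j _ k _
  · ring
  · rw [← two_mul_choose_two_add_self k, pow_add, pow_mul]
    ring

lemma prod_range_two_mul_one_add (hp0 : p ≠ 0) {x : K} (hx : x ≠ 0) (N : ℕ) :
    ∏ j ∈ range (2 * N), (1 + x * p⁻¹ ^ (2 * N) * p ^ (2 * j + 1)) =
      x ^ N * p⁻¹ ^ (N ^ 2) *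
        ((∏ j ∈ range N, (1 + x * p ^ (2 * j + 1))) *
          ∏ j ∈ range N, (1 + x⁻¹ * p ^ (2 * j + 1))) := by
  have hinv : p⁻¹ * p = 1 := inv_mul_cancel₀ hp0
  have hlow (j : ℕ) (hj : j < N) : 1 + x * p⁻¹ ^ (2 * N) * p ^ (2 * (N - 1 - j) + 1) =
      x * p⁻¹ ^ (2 * j + 1) * (1 + x⁻¹ * p ^ (2 * j + 1)) := by
    have hsplit : p⁻¹ ^ (2 * N) * p ^ (2 * (N - 1 - j) + 1) = p⁻¹ ^ (2 * j + 1) := by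
      rw [show 2 * N = (2 * j + 1) + (2 * (N - 1 - j) + 1) by omega, pow_add, mul_assoc,
        ← mul_pow, hinv, one_pow, mul_one]
    rw [mul_assoc x, hsplit, mul_add, mul_one, mul_mul_mul_comm, mul_inv_cancel₀ hx, ← mul_pow,
      hinv, one_pow, one_mul, add_comm]
  have hhigh (j : ℕ) :
      1 + x * p⁻¹ ^ (2 * N) * p ^ (2 * (N + j) + 1) = 1 + x * p ^ (2 * j + 1) := by
    rw [show 2 * (N + j) + 1 = 2 * N + (2 * j + 1) by ring, pow_add, mul_assoc x,
      ← mul_assoc _ (p ^ (2 * N)), ← mul_pow, hinv, one_pow, one_mul]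
  rw [two_mul, prod_range_add, ← two_mul, ← prod_range_reflect,
    prod_congr rfl fun j hj => hlow j (mem_range.mp hj), prod_mul_distrib, prod_mul_distrib,
    prod_const, card_range, prod_pow_eq_pow_sum, sum_range_two_mul_add_one]
  simp only [hhigh]
  ring

theorem prod_mul_prod_eq_sum_qBinomial (hp : ∀ n : ℕ, (p ^ 2) ^ (n + 1) ≠ 1) (hp0 : p ≠ 0)
    {x : K} (hx : x ≠ 0) (N : ℕ) :
    (∏ j ∈ range N, (1 + x * p ^ (2 * j + 1))) *
        ∏ j ∈ range N, (1 + x⁻¹ * p ^ (2 * j + 1)) =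
      ∑ k ∈ range (2 * N + 1),
        qBinomial (p ^ 2) (2 * N) k * p ^ (((k : ℤ) - N) ^ 2) * x ^ ((k : ℤ) - N) := by
  have h := prod_range_two_mul_one_add hp0 hx N
  rw [prod_one_add_mul_pow_odd hp] at h
  have hunit : x ^ N * p⁻¹ ^ (N ^ 2) ≠ 0 := by positivity
  rw [← mul_right_inj' hunit, ← h, mul_sum]
  refine sum_congr rfl fun k _ => ?_
  have hxk : x ^ k = x ^ N * x ^ ((k : ℤ) - N) := by
    rw [← zpow_natCast, ← zpow_natCast x N, ← zpow_add₀ hx, add_sub_cancel]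
  have hpk : p ^ (k ^ 2) * p⁻¹ ^ (2 * N * k) = p⁻¹ ^ (N ^ 2) * p ^ (((k : ℤ) - N) ^ 2) := by
    rw [inv_pow, inv_pow, ← zpow_natCast p (k ^ 2), ← zpow_natCast p (2 * N * k),
      ← zpow_natCast p (N ^ 2), ← zpow_neg, ← zpow_neg, ← zpow_add₀ hp0,
      ← zpow_add₀ hp0]
    congr 1
    push_cast
    ring
  rw [mul_pow, ← pow_mul, hxk]
  linear_combination (qBinomial (p ^ 2) (2 * N) k * x ^ N * x ^ ((k : ℤ) - N)) * hpk

end FiniteTripleProduct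

section QBinomialLimit

variable {t : ℂ}

lemma multipliable_one_add_mul_pow (ht : ‖t‖ < 1) (c : ℂ) :
    Multipliable fun n : ℕ => 1 + c * t ^ n :=
  multipliable_one_add_of_summable <| by
    simpa [norm_mul, norm_pow] using
      (summable_geometric_of_lt_one (norm_nonneg t) ht).mul_left ‖c‖

lemma norm_pow_lt_one_of_norm_lt_one (ht : ‖t‖ < 1) {n : ℕ} (hn : n ≠ 0) :
    ‖t ^ n‖ < 1 := by
  rw [norm_pow]
  exact pow_lt_one₀ (norm_nonneg t) ht hn

lemma pow_succ_ne_one_of_norm_lt_one (ht : ‖t‖ < 1) (n : ℕ) : t ^ (n + 1) ≠ 1 := fun h => by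
  simpa [h] using norm_pow_lt_one_of_norm_lt_one ht n.succ_ne_zero

lemma tendsto_qPochhammer (ht : ‖t‖ < 1) :
    Tendsto (qPochhammer t) atTop (𝓝 (∏' n : ℕ, (1 - t ^ (n + 1)))) :=
  (ModularForm.multipliable_one_sub_pow ht).hasProd.tendsto_prod_nat

lemma tprod_one_sub_pow_ne_zero (ht : ‖t‖ < 1) : ∏' n : ℕ, (1 - t ^ (n + 1)) ≠ 0 := by
  simp_rw [sub_eq_add_neg]
  refine tprod_one_add_ne_zero_of_summable (fun n => ?_) ?_
  · rw [← sub_eq_add_neg]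
    exact sub_ne_zero.mpr (pow_succ_ne_one_of_norm_lt_one ht n).symm
  · simpa [norm_pow] using (summable_nat_add_iff 1).mpr
      (summable_geometric_of_lt_one (norm_nonneg t) ht)

lemma exists_norm_qBinomial_le (ht : ‖t‖ < 1) :
    ∃ C, ∀ m k, ‖qBinomial t m k‖ ≤ C := by
  obtain ⟨A, hA⟩ := isBounded_iff_forall_norm_le.mp
    (Metric.isBounded_range_of_tendsto _ (tendsto_qPochhammer ht))
  obtain ⟨B, hB⟩ := isBounded_iff_forall_norm_le.mp (Metric.isBounded_range_of_tendsto _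
    ((tendsto_qPochhammer ht).inv₀ (tprod_one_sub_pow_ne_zero ht)))
  have hA' (m : ℕ) : ‖qPochhammer t m‖ ≤ A := hA _ ⟨m, rfl⟩
  have hB' (m : ℕ) : ‖(qPochhammer t m)⁻¹‖ ≤ B := hB _ ⟨m, rfl⟩
  have hB0 : 0 ≤ B := (norm_nonneg _).trans (hB' 0)
  refine ⟨A * (B * B), fun m k => ?_⟩
  unfold qBinomial
  split_ifs
  · rw [div_eq_mul_inv, mul_inv, norm_mul, norm_mul]
    gcongr
    exacts [(norm_nonneg _).trans (hA' 0), hA' m, hB' k, hB' (m - k)]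
  · simpa using mul_nonneg ((norm_nonneg _).trans (hA' 0)) (mul_nonneg hB0 hB0)

lemma tendsto_qBinomial_two_mul (ht : ‖t‖ < 1) (n : ℤ) :
    Tendsto (fun N : ℕ => qBinomial t (2 * N) (n + N).toNat) atTop
      (𝓝 (∏' n : ℕ, (1 - t ^ (n + 1)))⁻¹) := by
  have hP := tendsto_qPochhammer ht
  have hP0 := tprod_one_sub_pow_ne_zero ht
  have hk : Tendsto (fun N : ℕ => (n + N).toNat) atTop atTop :=
    tendsto_atTop_atTop.mpr fun b => ⟨b + n.natAbs, fun N hN => by omega⟩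
  have hl : Tendsto (fun N : ℕ => 2 * N - (n + N).toNat) atTop atTop :=
    tendsto_atTop_atTop.mpr fun b => ⟨b + n.natAbs, fun N hN => by omega⟩
  have hm : Tendsto (fun N : ℕ => 2 * N) atTop atTop :=
    tendsto_id.const_mul_atTop' two_pos
  have hlim := (hP.comp hm).div ((hP.comp hk).mul (hP.comp hl)) (mul_ne_zero hP0 hP0)
  rw [div_mul_cancel_left₀ hP0] at hlim
  refine hlim.congr' ?_
  filter_upwards [eventually_ge_atTop n.natAbs] with N hN
  simp only [Pi.div_apply, Function.comp_apply, qBinomial,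
    if_pos (by omega : (n + N).toNat ≤ 2 * N)]

end QBinomialLimit

section TripleProduct

variable {p x : ℂ}

lemma jacobiTheta₂_term_eq_zpow (n : ℤ) (z τ : ℂ) :
    jacobiTheta₂_term n z τ = cexp (π * I * τ) ^ (n ^ 2) * cexp (2 * π * I * z) ^ n := by
  rw [jacobiTheta₂_term, ← exp_int_mul, ← exp_int_mul, ← Complex.exp_add]
  congr 1
  push_cast
  ring

/-- Writing `p = e^{πiτ}` and `x = e^{2πiz}`, this is the absolute convergence of the series
defining `jacobiTheta₂ z τ`. -/
lemma summable_norm_zpow_sq_mul_zpow (hp : ‖p‖ < 1) (hp0 : p ≠ 0) (hx : x ≠ 0) :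
    Summable fun n : ℤ => ‖p ^ (n ^ 2) * x ^ n‖ := by
  set τ := log p / (π * I)
  have hτ : 0 < τ.im := by
    have : τ.im = -Real.log ‖p‖ / π := by
      simp [τ, div_eq_mul_inv, Complex.log_re]
    rw [this]
    exact div_pos (neg_pos.mpr (Real.log_neg (norm_pos_iff.mpr hp0) hp)) Real.pi_pos
  have hterm (n : ℤ) : p ^ (n ^ 2) * x ^ n = jacobiTheta₂_term n (log x / (2 * π * I)) τ := by
    rw [jacobiTheta₂_term_eq_zpow, mul_div_cancel₀ _ (by simp [Real.pi_ne_zero]),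
      mul_div_cancel₀ _ (by simp [Real.pi_ne_zero]), exp_log hp0, exp_log hx]
  simpa only [hterm] using ((summable_jacobiTheta₂_term_iff _ τ).mpr hτ).norm

lemma multipliable_one_add_mul_pow_odd (hp : ‖p‖ < 1) (c : ℂ) :
    Multipliable fun j : ℕ => 1 + c * p ^ (2 * j + 1) :=
  (multipliable_one_add_mul_pow (norm_pow_lt_one_of_norm_lt_one hp two_ne_zero) (c * p)).congr
    fun j => by ring

lemma tsum_ite_qBinomial_mul_eq_prod (hp : ‖p‖ < 1) (hp0 : p ≠ 0) (hx : x ≠ 0) (N : ℕ) :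
    ∑' n : ℤ, (if n.natAbs ≤ N then qBinomial (p ^ 2) (2 * N) (n + N).toNat else 0) *
        (p ^ (n ^ 2) * x ^ n) =
      (∏ j ∈ range N, (1 + x * p ^ (2 * j + 1))) *
        ∏ j ∈ range N, (1 + x⁻¹ * p ^ (2 * j + 1)) := by
  have hq := norm_pow_lt_one_of_norm_lt_one hp two_ne_zero
  rw [prod_mul_prod_eq_sum_qBinomial (pow_succ_ne_one_of_norm_lt_one hq) hp0 hx N,
    tsum_eq_sum (s := Icc (-N : ℤ) N) fun n hn => by
      rw [if_neg (by simp only [mem_Icc, not_and_or, not_le] at hn; omega), zero_mul]]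
  refine sum_nbij' (fun n => (n + N).toNat) (fun k => (k : ℤ) - N) ?_ ?_ ?_ ?_ ?_
  all_goals intro n hn
  all_goals simp only [mem_Icc, mem_range] at hn ⊢
  all_goals try omega
  rw [if_pos (by omega), Int.toNat_of_nonneg (by omega), add_sub_cancel_right, mul_assoc]

theorem jacobi_triple_product (hp : ‖p‖ < 1) (hp0 : p ≠ 0) (hx : x ≠ 0) :
    (∏' n : ℕ, (1 - (p ^ 2) ^ (n + 1))) *
        ((∏' n : ℕ, (1 + x * p ^ (2 * n + 1))) * ∏' n : ℕ, (1 + x⁻¹ * p ^ (2 * n + 1))) =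
      ∑' n : ℤ, p ^ (n ^ 2) * x ^ n := by
  have hq := norm_pow_lt_one_of_norm_lt_one hp two_ne_zero
  obtain ⟨C, hC⟩ := exists_norm_qBinomial_le hq
  have hcoeff (n : ℤ) : Tendsto
      (fun N : ℕ => if n.natAbs ≤ N then qBinomial (p ^ 2) (2 * N) (n + N).toNat else 0) atTop
      (𝓝 (∏' n : ℕ, (1 - (p ^ 2) ^ (n + 1)))⁻¹) :=
    (tendsto_qBinomial_two_mul hq n).congr' <| by
      filter_upwards [eventually_ge_atTop n.natAbs] with N hN using (if_pos hN).symm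
  have hsum := tendsto_tsum_of_dominated_convergence
    ((summable_norm_zpow_sq_mul_zpow hp hp0 hx).mul_left C)
    (fun n => (hcoeff n).mul_const (p ^ (n ^ 2) * x ^ n))
    (Eventually.of_forall fun N n => by
      rw [norm_mul]
      gcongr
      split_ifs
      · exact hC _ _
      · simpa using (norm_nonneg _).trans (hC 0 0))
  simp_rw [tsum_ite_qBinomial_mul_eq_prod hp hp0 hx, tsum_mul_left] at hsum
  have hprod := (multipliable_one_add_mul_pow_odd hp x).hasProd.tendsto_prod_nat.mul
    (multipliable_one_add_mul_pow_odd hp x⁻¹).hasProd.tendsto_prod_nat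
  rw [tendsto_nhds_unique hprod hsum, mul_inv_cancel_left₀ (tprod_one_sub_pow_ne_zero hq)]

end TripleProduct

section JTheta

lemma norm_exp_pi_mul_I_mul_lt_one {τ : ℂ} (hτ : 0 < τ.im) : ‖cexp (π * I * τ)‖ < 1 := by
  rw [norm_exp, Real.exp_lt_one_iff]
  simpa using mul_pos Real.pi_pos hτ

lemma exp_two_pi_mul_I_mul (τ : ℂ) : cexp (2 * π * I * τ) = cexp (π * I * τ) ^ 2 := by
  rw [← Complex.exp_nat_mul]
  ring_nf

lemma two_mul_sin_pi_mul (v : ℂ) :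
    2 * Complex.sin (π * v) = -I * cexp (π * I * v) * (1 - cexp (-(2 * π * I * v))) := by
  rw [Complex.sin, show -(π * v) * I = π * I * v + -(2 * π * I * v) by ring,
    show (π : ℂ) * v * I = π * I * v by ring, Complex.exp_add]
  ring

lemma tprod_JThetaFactor {τ : ℂ} (hτ : 0 < τ.im) (v : ℂ) :
    ∏' n : ℕ, JThetaFactor v τ n =
      (∏' n : ℕ, (1 - cexp (2 * π * I * τ) ^ (n + 1))) *
        (∏' n : ℕ, (1 - cexp (2 * π * I * v) * cexp (2 * π * I * τ) ^ (n + 1))) *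
          ∏' n : ℕ, (1 - cexp (-(2 * π * I * v)) * cexp (2 * π * I * τ) ^ (n + 1)) := by
  have hq : ‖cexp (2 * π * I * τ)‖ < 1 := by
    rw [exp_two_pi_mul_I_mul]
    exact norm_pow_lt_one_of_norm_lt_one (norm_exp_pi_mul_I_mul_lt_one hτ) two_ne_zero
  have hmul (c : ℂ) : Multipliable fun n : ℕ => 1 - c * cexp (2 * π * I * τ) ^ (n + 1) :=
    (multipliable_one_add_mul_pow hq (-(c * cexp (2 * π * I * τ)))).congr fun n => by ring
  rw [← (ModularForm.multipliable_one_sub_pow hq).tprod_mul (hmul _),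
    ← ((ModularForm.multipliable_one_sub_pow hq).mul (hmul _)).tprod_mul (hmul _)]
  rfl

lemma tprod_one_sub_mul_pow {q : ℂ} (hq : ‖q‖ < 1) (c : ℂ) :
    ∏' n : ℕ, (1 - c * q ^ n) = (1 - c) * ∏' n : ℕ, (1 - c * q ^ (n + 1)) := by
  rw [tprod_eq_zero_mul', pow_zero, mul_one]
  exact (multipliable_one_add_mul_pow hq (-(c * q))).congr fun n => by ring

theorem jTheta_eq_jacobiTheta₂ {τ : ℂ} (hτ : 0 < τ.im) (v : ℂ) :
    JTheta v τ =
      -I * cexp (π * I * τ / 4 + π * I * v) * jacobiTheta₂ (v + (τ + 1) / 2) τ := by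
  have hp := norm_exp_pi_mul_I_mul_lt_one hτ
  have hsum : jacobiTheta₂ (v + (τ + 1) / 2) τ =
      ∑' n : ℤ,
        cexp (π * I * τ) ^ (n ^ 2) * (-(cexp (2 * π * I * v) * cexp (π * I * τ))) ^ n := by
    refine tsum_congr fun n => ?_
    rw [jacobiTheta₂_term_eq_zpow, show 2 * π * I * (v + (τ + 1) / 2) =
      2 * π * I * v + π * I * τ + π * I by ring, Complex.exp_add, Complex.exp_add, exp_pi_mul_I,
      mul_neg_one]
  have hexp :
      cexp (2 * π * I * τ / 8) * cexp (π * I * v) = cexp (π * I * τ / 4 + π * I * v) := by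
    rw [← Complex.exp_add]
    ring_nf
  rw [JTheta, tprod_JThetaFactor hτ, exp_two_pi_mul_I_mul, ← hexp, hsum,
    ← jacobi_triple_product hp (Complex.exp_ne_zero _)
      (neg_ne_zero.mpr (mul_ne_zero (Complex.exp_ne_zero _) (Complex.exp_ne_zero _)))]
  have hp0 := Complex.exp_ne_zero (π * I * τ)
  have hsin := two_mul_sin_pi_mul v
  rw [Complex.exp_neg] at hsin ⊢
  generalize cexp (π * I * τ) = p at hp hp0 ⊢
  generalize cexp (2 * π * I * v) = e at hsin ⊢
  have hq := norm_pow_lt_one_of_norm_lt_one hp two_ne_zero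
  rw [tprod_congr fun n => show 1 + -(e * p) * p ^ (2 * n + 1) = 1 - e * (p ^ 2) ^ (n + 1) by
      ring,
    tprod_congr fun n => show 1 + (-(e * p))⁻¹ * p ^ (2 * n + 1) = 1 - e⁻¹ * (p ^ 2) ^ n by
      field_simp; ring,
    tprod_one_sub_mul_pow hq]
  linear_combination (cexp (2 * π * I * τ / 8) * (∏' n : ℕ, (1 - (p ^ 2) ^ (n + 1))) *
    (∏' n : ℕ, (1 - e * (p ^ 2) ^ (n + 1))) *
      ∏' n : ℕ, (1 - e⁻¹ * (p ^ 2) ^ (n + 1))) * hsin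

lemma differentiable_JTheta {τ : ℂ} (hτ : 0 < τ.im) :
    Differentiable ℂ (fun v => JTheta v τ) := by
  rw [funext (jTheta_eq_jacobiTheta₂ hτ)]
  exact fun v =>
    (by fun_prop : DifferentiableAt ℂ (fun w => -I * cexp (π * I * τ / 4 + π * I * w)) v).mul
      ((differentiableAt_jacobiTheta₂_fst _ hτ).comp v (by fun_prop))

theorem jTheta_neg_one_div {τ : ℂ} (hτ : 0 < τ.im) (v : ℂ) :
    JTheta v (-1 / τ) =
      1 / I * (τ / I) ^ (1 / 2 : ℂ) * cexp (π * I * τ * v ^ 2) * JTheta (τ * v) τ := by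
  have hτ0 : τ ≠ 0 := fun h => by simp [h] at hτ
  have hσ : 0 < (-1 / τ).im := by
    rw [neg_div, neg_im, one_div, inv_im, neg_div, neg_neg]
    exact div_pos hτ (normSq_pos.mpr hτ0)
  rw [jTheta_eq_jacobiTheta₂ hσ, jTheta_eq_jacobiTheta₂ hτ]
  set a := v + (-1 / τ + 1) / 2
  have hFE := jacobiTheta₂_functional_equation (τ * a) τ
  rw [mul_div_cancel_left₀ a hτ0] at hFE
  have hexp : cexp (π * I * (-1 / τ) / 4 + π * I * v) = -I * (cexp (π * I * τ * v ^ 2) *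
      cexp (π * I * τ / 4 + π * I * (τ * v)) * cexp (-π * I * (τ * a) ^ 2 / τ)) := by
    rw [← exp_neg_pi_div_two_mul_I, ← Complex.exp_add, ← Complex.exp_add, ← Complex.exp_add]
    congr 1
    simp only [a]
    field_simp
    ring
  have hc : (-I * τ) ^ (1 / 2 : ℂ) ≠ 0 := by
    simp [cpow_eq_zero_iff, hτ0]
  rw [show τ * v + (τ + 1) / 2 = τ * a + 1 by simp only [a]; field_simp; ring,
    jacobiTheta₂_add_left, hFE, show τ / I = -I * τ by rw [div_I]; ring, hexp]
  field_simp
  rw [I_sq, neg_one_mul]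

end JTheta

theorem jTheta_deriv_S_transform (τ : ℂ) (hτ : 0 < τ.im) (v : ℂ) :
    deriv (fun w => JTheta w (-1 / τ)) v =
      1 / I * (τ / I) ^ (1 / 2 : ℂ) * Complex.exp ((Real.pi : ℂ) * I * τ * v ^ 2) *
        (2 * (Real.pi : ℂ) * I * τ * v * JTheta (τ * v) τ +
          τ * deriv (fun w => JTheta w τ) (τ * v)) := by
  have hgauss : HasDerivAt (fun w => cexp (π * I * τ * w ^ 2))
      (cexp (π * I * τ * v ^ 2) * (2 * π * I * τ * v)) v :=
    ((hasDerivAt_pow 2 v).const_mul (π * I * τ)).cexp.congr_deriv (by norm_num; ring)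
  have htheta : HasDerivAt (fun w => JTheta (τ * w) τ)
      (deriv (fun w => JTheta w τ) (τ * v) * τ) v :=
    (differentiable_JTheta hτ (τ * v)).hasDerivAt.comp v
      (by simpa using (hasDerivAt_id v).const_mul τ)
  rw [funext (jTheta_neg_one_div hτ)]
  exact ((hgauss.const_mul _).mul htheta).deriv.trans (by ring)
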